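/- arXiv:2302.09872 — 2 statements merged into one kernel-verified Lean document; each statement's English description precedes it below -/
import Mathlib

section
/- Monotonicity of RNMDT relaxations in the precision factor: for negative integers p1 < p2 ≤ -1, every point feasible for the RNMDT_{p1} relaxation constraints on (y, w) (with its own binaries and residuals) projects to a point feasible for RNMDT_{p2}; consequently the optimal value satisfies z^{RNMDT_{p2}} ≤ z^{RNMDT_{p1}} ≤ z^{SMIP}, i.e., RNMDT_{p1} is a tighter (or equal) relaxation of the original problem than RNMDT_{p2}. -/
open Finset

/-!
Coarsening the precision from `p` to `p + 1` moves the finest bit into the residual: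
`Δy' = 2^p z_p + Δy ≤ 2^(p+1)` and `Δw' = y_i 2^p z_p + Δw`. Since `y_i · 2^p z_p` is an exact
product with `2^p z_p ∈ [0, 2^p]`, the McCormick envelope of the residual product over
`[NL, NU] × [0, 2^p]` becomes one over `[NL, NU] × [0, 2^(p+1)]`; iterating gives the projection.
The exact point `w = y_i y_j` is feasible at every precision, by a greedy binary expansion of `y_j`.
The inequalities between optimal values are then inclusions of the sets of attainable values.
-/

/-- RNMDT feasibility (per bilinear pair, normalized `y_j ∈ [0,1]`,
`y_i ∈ [NL, NU]`): `w` is represented through the binary expansion of `y_j`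
with precision `p` (binaries `z_l`, `l ∈ {p,…,-1}`, residual `Δy ∈ [0, 2^p]`),
exact products `y_i z_l`, and McCormick-type bounds on the residual product. -/
def RNMDTFeas (NL NU : ℝ) (p : ℤ) (yi yj w : ℝ) : Prop :=
  ∃ (z : ℤ → ℝ) (Δy Δw : ℝ),
    (∀ l ∈ Finset.Icc p (-1 : ℤ), z l = 0 ∨ z l = 1) ∧
    0 ≤ Δy ∧ Δy ≤ (2 : ℝ) ^ p ∧
    yj = (∑ l ∈ Finset.Icc p (-1 : ℤ), (2 : ℝ) ^ l * z l) + Δy ∧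
    w = (∑ l ∈ Finset.Icc p (-1 : ℤ), (2 : ℝ) ^ l * (yi * z l)) + Δw ∧
    NL * Δy ≤ Δw ∧ Δw ≤ NU * Δy ∧
    (2 : ℝ) ^ p * (yi - NU) + NU * Δy ≤ Δw ∧
    Δw ≤ (2 : ℝ) ^ p * (yi - NL) + NL * Δy

def IsBinaryExpansion (p : ℤ) (y : ℝ) (z : ℤ → ℝ) (Δ : ℝ) : Prop :=
  (∀ l ∈ Icc p (-1 : ℤ), z l = 0 ∨ z l = 1) ∧ 0 ≤ Δ ∧ Δ ≤ (2 : ℝ) ^ p ∧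
    y = (∑ l ∈ Icc p (-1 : ℤ), (2 : ℝ) ^ l * z l) + Δ

/-- The McCormick envelope of `Δw = yi * Δy` over `yi ∈ [NL, NU]`, `Δy ∈ [0, U]`. -/
def McCormickEnvelope (NL NU U yi Δy Δw : ℝ) : Prop :=
  NL * Δy ≤ Δw ∧ Δw ≤ NU * Δy ∧ U * (yi - NU) + NU * Δy ≤ Δw ∧ Δw ≤ U * (yi - NL) + NL * Δy

lemma sum_Icc_neg_one_eq_add {M : Type*} [AddCommMonoid M] (f : ℤ → M) {p : ℤ} (hp : p ≤ -1) :
    ∑ l ∈ Icc p (-1 : ℤ), f l = f p + ∑ l ∈ Icc (p + 1) (-1 : ℤ), f l := by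
  rw [← insert_Icc_add_one_left_eq_Icc hp, sum_insert (by simp)]

lemma exists_bit_sub_mul_mem_Icc {Δ h : ℝ} (h0 : 0 ≤ Δ) (h1 : Δ ≤ 2 * h) :
    ∃ b : ℝ, (b = 0 ∨ b = 1) ∧ 0 ≤ Δ - h * b ∧ Δ - h * b ≤ h := by
  by_cases hΔ : Δ ≤ h
  · exact ⟨0, Or.inl rfl, by simpa using h0, by simpa using hΔ⟩
  · exact ⟨1, Or.inr rfl, by linarith, by linarith⟩

namespace IsBinaryExpansion

variable {p : ℤ} {y Δ : ℝ} {z : ℤ → ℝ}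

lemma zero (h0 : 0 ≤ y) (h1 : y ≤ 1) (z : ℤ → ℝ) : IsBinaryExpansion 0 y z y :=
  ⟨by simp, h0, by simpa using h1, by simp⟩

lemma refine (h : IsBinaryExpansion (p + 1) y z Δ) (hp : p ≤ -1) :
    ∃ z' Δ', IsBinaryExpansion p y z' Δ' := by
  obtain ⟨hz, hΔ0, hΔ1, hy⟩ := h
  have hpow : (2 : ℝ) ^ (p + 1) = 2 * 2 ^ p := by rw [zpow_add_one₀ two_ne_zero, mul_comm]
  obtain ⟨b, hb, hb0, hb1⟩ := exists_bit_sub_mul_mem_Icc hΔ0 (hpow ▸ hΔ1)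
  have hp_notMem : p ∉ Icc (p + 1) (-1 : ℤ) := by simp
  refine ⟨Function.update z p b, Δ - 2 ^ p * b, fun l hl => ?_, hb0, hb1, ?_⟩
  · rcases eq_or_ne l p with rfl | hlp
    · simpa using hb
    · rw [Function.update_of_ne hlp]
      exact hz l (by simp only [mem_Icc] at hl ⊢; omega)
  · have hsum : ∑ l ∈ Icc (p + 1) (-1 : ℤ), (2 : ℝ) ^ l * Function.update z p b l =
        ∑ l ∈ Icc (p + 1) (-1 : ℤ), (2 : ℝ) ^ l * z l :=
      sum_congr rfl fun l hl => by rw [Function.update_of_ne (by rintro rfl; exact hp_notMem hl)]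
    rw [sum_Icc_neg_one_eq_add _ hp, Function.update_self, hsum, hy]
    ring

lemma bit_mem_Icc (h : IsBinaryExpansion p y z Δ) (hp : p ≤ -1) :
    (2 : ℝ) ^ p * z p ∈ Set.Icc 0 (2 ^ p) := by
  rcases h.1 p (by simp [hp]) with hzp | hzp <;> simp [hzp, zpow_nonneg]

lemma coarsen_one (h : IsBinaryExpansion p y z Δ) (hp : p ≤ -1) :
    IsBinaryExpansion (p + 1) y z (2 ^ p * z p + Δ) := by
  have hbit := h.bit_mem_Icc hp
  obtain ⟨hz, hΔ0, hΔ1, hy⟩ := h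
  refine ⟨fun l hl => hz l (by simp only [mem_Icc] at hl ⊢; omega), by linarith [hbit.1], ?_, ?_⟩
  · rw [zpow_add_one₀ two_ne_zero]
    linarith [hbit.2]
  · rw [hy, sum_Icc_neg_one_eq_add _ hp]
    ring

end IsBinaryExpansion

lemma exists_isBinaryExpansion {p : ℤ} (hp : p ≤ 0) {y : ℝ} (h0 : 0 ≤ y) (h1 : y ≤ 1) :
    ∃ z Δ, IsBinaryExpansion p y z Δ := by
  induction p, hp using Int.leInductionDown with
  | base => exact ⟨0, y, .zero h0 h1 0⟩
  | pred p hp ih =>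
    obtain ⟨z, Δ, h⟩ := ih
    exact IsBinaryExpansion.refine (by rwa [sub_add_cancel]) (by omega)

namespace McCormickEnvelope

variable {NL NU yi : ℝ}

lemma zero : McCormickEnvelope NL NU 0 yi 0 0 := by
  simp [McCormickEnvelope]

lemma add_mul {U Δy Δw : ℝ} (h : McCormickEnvelope NL NU U yi Δy Δw)
    (hL : NL ≤ yi) (hU : yi ≤ NU) {s V : ℝ} (hs0 : 0 ≤ s) (hsV : s ≤ V) :
    McCormickEnvelope NL NU (V + U) yi (s + Δy) (yi * s + Δw) := by
  obtain ⟨h1, h2, h3, h4⟩ := h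
  refine ⟨?_, ?_, ?_, ?_⟩ <;>
    nlinarith [mul_nonneg hs0 (sub_nonneg.2 hL), mul_nonneg hs0 (sub_nonneg.2 hU),
      mul_nonneg (sub_nonneg.2 hsV) (sub_nonneg.2 hL), mul_nonneg (sub_nonneg.2 hsV) (sub_nonneg.2 hU)]

lemma mul (hL : NL ≤ yi) (hU : yi ≤ NU) {Δ U : ℝ} (h0 : 0 ≤ Δ) (h1 : Δ ≤ U) :
    McCormickEnvelope NL NU U yi Δ (yi * Δ) := by
  simpa using zero.add_mul hL hU h0 h1

end McCormickEnvelope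

lemma rnmdtFeas_iff {NL NU : ℝ} {p : ℤ} {yi yj w : ℝ} :
    RNMDTFeas NL NU p yi yj w ↔ ∃ z Δy Δw, IsBinaryExpansion p yj z Δy ∧
      w = (∑ l ∈ Icc p (-1 : ℤ), (2 : ℝ) ^ l * (yi * z l)) + Δw ∧
      McCormickEnvelope NL NU (2 ^ p) yi Δy Δw := by
  simp only [RNMDTFeas, IsBinaryExpansion, McCormickEnvelope, and_assoc]

lemma rnmdtFeas_mul {NL NU : ℝ} {p : ℤ} (hp : p ≤ 0) {yi yj : ℝ} (hL : NL ≤ yi) (hU : yi ≤ NU)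
    (h0 : 0 ≤ yj) (h1 : yj ≤ 1) : RNMDTFeas NL NU p yi yj (yi * yj) := by
  obtain ⟨z, Δ, hexp⟩ := exists_isBinaryExpansion hp h0 h1
  have ⟨_, hΔ0, hΔ1, hyj⟩ := hexp
  refine rnmdtFeas_iff.2 ⟨z, Δ, yi * Δ, hexp, ?_, .mul hL hU hΔ0 hΔ1⟩
  rw [hyj, mul_add, mul_sum]
  simp only [mul_left_comm]

namespace RNMDTFeas

variable {NL NU yi yj w : ℝ}

lemma coarsen_one {p : ℤ} (h : RNMDTFeas NL NU p yi yj w) (hp : p ≤ -1)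
    (hL : NL ≤ yi) (hU : yi ≤ NU) : RNMDTFeas NL NU (p + 1) yi yj w := by
  obtain ⟨z, Δy, Δw, hexp, hw, henv⟩ := rnmdtFeas_iff.1 h
  have hbit := hexp.bit_mem_Icc hp
  refine rnmdtFeas_iff.2 ⟨z, _, yi * (2 ^ p * z p) + Δw, hexp.coarsen_one hp, ?_, ?_⟩
  · rw [hw, sum_Icc_neg_one_eq_add _ hp]
    ring
  · rw [zpow_add_one₀ two_ne_zero, mul_two]
    exact henv.add_mul hL hU hbit.1 hbit.2

lemma coarsen {p1 p2 : ℤ} (h : RNMDTFeas NL NU p1 yi yj w) (h12 : p1 ≤ p2) (h2 : p2 ≤ 0)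
    (hL : NL ≤ yi) (hU : yi ≤ NU) : RNMDTFeas NL NU p2 yi yj w := by
  induction p2, h12 using Int.leInduction with
  | base => exact h
  | succ p hp ih => exact (ih (by omega)).coarsen_one (by omega) hL hU

end RNMDTFeas

theorem rnmdt_monotone_general (NL NU : ℝ)
    (p1 p2 : ℤ) (h12 : p1 < p2) (h2 : p2 ≤ -1)
    (f : ℝ → ℝ → ℝ → ℝ)
    (Vals : ℤ → Set ℝ)
    (hVals : ∀ p, Vals p = {r | ∃ yi yj w, NL ≤ yi ∧ yi ≤ NU ∧
        0 ≤ yj ∧ yj ≤ 1 ∧ RNMDTFeas NL NU p yi yj w ∧ r = f yi yj w})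
    (SMIPVals : Set ℝ)
    (hSMIP : SMIPVals = {r | ∃ yi yj w, NL ≤ yi ∧ yi ≤ NU ∧
        0 ≤ yj ∧ yj ≤ 1 ∧ w = yi * yj ∧ r = f yi yj w})
    (hBdd1 : BddBelow (Vals p1)) (hBdd2 : BddBelow (Vals p2))
    (hNe : SMIPVals.Nonempty) :
    (∀ yi yj w, NL ≤ yi → yi ≤ NU → 0 ≤ yj → yj ≤ 1 →
        RNMDTFeas NL NU p1 yi yj w → RNMDTFeas NL NU p2 yi yj w) ∧
    sInf (Vals p2) ≤ sInf (Vals p1) ∧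
    sInf (Vals p1) ≤ sInf SMIPVals := by
  have hproj : ∀ yi yj w, NL ≤ yi → yi ≤ NU → 0 ≤ yj → yj ≤ 1 →
      RNMDTFeas NL NU p1 yi yj w → RNMDTFeas NL NU p2 yi yj w :=
    fun _ _ _ hL hU _ _ h => h.coarsen h12.le (by omega) hL hU
  have hsub12 : Vals p1 ⊆ Vals p2 := by
    rw [hVals p1, hVals p2]
    rintro r ⟨yi, yj, w, hL, hU, h0, h1, h, hr⟩
    exact ⟨yi, yj, w, hL, hU, h0, h1, hproj yi yj w hL hU h0 h1 h, hr⟩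
  have hsubS : SMIPVals ⊆ Vals p1 := by
    rw [hSMIP, hVals p1]
    rintro r ⟨yi, yj, w, hL, hU, h0, h1, rfl, hr⟩
    exact ⟨yi, yj, _, hL, hU, h0, h1, rnmdtFeas_mul (by omega) hL hU h0 h1, hr⟩
  exact ⟨hproj, csInf_le_csInf hBdd2 (hNe.mono hsubS) hsub12, csInf_le_csInf hBdd1 hNe hsubS⟩

/-- Monotonicity of RNMDT relaxations in the precision factor `p`: for
`p1 < p2 ≤ -1`, every RNMDT_{p1}-feasible point projects to an
RNMDT_{p2}-feasible point; consequently the optimal values satisfy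
`z^{RNMDT_{p2}} ≤ z^{RNMDT_{p1}} ≤ z^{SMIP}`. -/
theorem rnmdt_monotone (NL NU : ℝ) (hNLU : NL ≤ NU)
    (p1 p2 : ℤ) (h12 : p1 < p2) (h2 : p2 ≤ -1)
    (f : ℝ → ℝ → ℝ → ℝ)
    (Vals : ℤ → Set ℝ)
    (hVals : ∀ p, Vals p = {r | ∃ yi yj w, NL ≤ yi ∧ yi ≤ NU ∧
        0 ≤ yj ∧ yj ≤ 1 ∧ RNMDTFeas NL NU p yi yj w ∧ r = f yi yj w})
    (SMIPVals : Set ℝ)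
    (hSMIP : SMIPVals = {r | ∃ yi yj w, NL ≤ yi ∧ yi ≤ NU ∧
        0 ≤ yj ∧ yj ≤ 1 ∧ w = yi * yj ∧ r = f yi yj w})
    (hBdd1 : BddBelow (Vals p1)) (hBdd2 : BddBelow (Vals p2))
    (hNe : SMIPVals.Nonempty) :
    (∀ yi yj w, NL ≤ yi → yi ≤ NU → 0 ≤ yj → yj ≤ 1 →
        RNMDTFeas NL NU p1 yi yj w → RNMDTFeas NL NU p2 yi yj w) ∧
    sInf (Vals p2) ≤ sInf (Vals p1) ∧
    sInf (Vals p1) ≤ sInf SMIPVals :=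
  rnmdt_monotone_general NL NU p1 p2 h12 h2 f Vals hVals SMIPVals hSMIP hBdd1 hBdd2 hNe
end

section
/- Approximation error of the RNMDT substitution: if y_j = (N^U_j − N^L_j)(∑_{l=p}^{-1} 2^l z_{j,l} + Δy_j) + N^L_j with z_{j,l} ∈ {0,1}, 0 ≤ Δy_j ≤ 2^p, and w_{ij} = (N^U_j − N^L_j)(∑_{l=p}^{-1} 2^l y_i z_{j,l} + Δw_{ij}) + y_i N^L_j with N^L_i Δy_j ≤ Δw_{ij} ≤ N^U_i Δy_j, then |w_{ij} − y_i y_j| ≤ (N^U_j − N^L_j)(N^U_i − N^L_i) 2^p; in particular the error tends to 0 as p → −∞. -/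
/-!
The binary-expansion parts of `w` and of `y_i y_j` cancel exactly, leaving
`w - y_i y_j = (N^U_j - N^L_j) (Δw - y_i Δy)`. Both `Δw` and `y_i Δy` lie in
`[N^L_i Δy, N^U_i Δy]`, an interval of length `(N^U_i - N^L_i) Δy ≤ (N^U_i - N^L_i) 2^p`.
-/

open Finset

theorem sub_mul_eq_of_expansion {ι R : Type*} [CommRing R] {s : Finset ι} {a z : ι → R}
    {x y w D L δy δw : R}
    (hy : y = D * ((∑ l ∈ s, a l * z l) + δy) + L)
    (hw : w = D * ((∑ l ∈ s, a l * (x * z l)) + δw) + x * L) :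
    w - x * y = D * (δw - x * δy) := by
  have hsum : ∑ l ∈ s, a l * (x * z l) = x * ∑ l ∈ s, a l * z l := by
    rw [mul_sum]
    exact sum_congr rfl fun l _ => mul_left_comm _ _ _
  rw [hw, hy, hsum]
  ring

theorem abs_sub_mul_le_of_mem_Icc {R : Type*} [Ring R] [LinearOrder R] [IsOrderedRing R]
    {a b x d e : R} (hax : a ≤ x) (hxb : x ≤ b) (hd : 0 ≤ d)
    (hae : a * d ≤ e) (heb : e ≤ b * d) :
    |e - x * d| ≤ (b - a) * d := by
  rw [abs_sub_le_iff, sub_mul]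
  exact ⟨sub_le_sub heb (mul_le_mul_of_nonneg_right hax hd),
    sub_le_sub (mul_le_mul_of_nonneg_right hxb hd) hae⟩

theorem rnmdt_approximation_error_general
    (NLi NUi NLj NUj yi yj w : ℝ) (p : ℤ)
    (hiL : NLi ≤ yi) (hiU : yi ≤ NUi) (hjL : NLj ≤ yj) (hjU : yj ≤ NUj)
    (z : ℤ → ℝ) (Δy Δw : ℝ)
    (hΔ0 : 0 ≤ Δy) (hΔp : Δy ≤ (2 : ℝ) ^ p)
    (hyj : yj = (NUj - NLj) * ((∑ l ∈ Finset.Icc p (-1 : ℤ), (2 : ℝ) ^ l * z l) + Δy) + NLj)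
    (hw : w = (NUj - NLj) * ((∑ l ∈ Finset.Icc p (-1 : ℤ), (2 : ℝ) ^ l * (yi * z l)) + Δw)
            + yi * NLj)
    (hΔwL : NLi * Δy ≤ Δw) (hΔwU : Δw ≤ NUi * Δy) :
    |w - yi * yj| ≤ (NUj - NLj) * (NUi - NLi) * (2 : ℝ) ^ p := by
  have hj : 0 ≤ NUj - NLj := sub_nonneg.2 (hjL.trans hjU)
  have hi : 0 ≤ NUi - NLi := sub_nonneg.2 (hiL.trans hiU)
  calc |w - yi * yj| = (NUj - NLj) * |Δw - yi * Δy| := by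
        rw [sub_mul_eq_of_expansion hyj hw, abs_mul, abs_of_nonneg hj]
    _ ≤ (NUj - NLj) * ((NUi - NLi) * Δy) := by
        gcongr
        exact abs_sub_mul_le_of_mem_Icc hiL hiU hΔ0 hΔwL hΔwU
    _ ≤ (NUj - NLj) * (NUi - NLi) * (2 : ℝ) ^ p := by
        rw [← mul_assoc]
        gcongr

/-- Approximation error of the RNMDT substitution: the surrogate `w_{ij}` for
the bilinear term `y_i y_j` with precision factor `p` satisfies
`|w_{ij} - y_i y_j| ≤ (N^U_j - N^L_j)(N^U_i - N^L_i) 2^p`. -/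
theorem rnmdt_approximation_error
    (NLi NUi NLj NUj yi yj w : ℝ) (p : ℤ)
    (hiL : NLi ≤ yi) (hiU : yi ≤ NUi) (hjL : NLj ≤ yj) (hjU : yj ≤ NUj)
    (z : ℤ → ℝ) (Δy Δw : ℝ)
    (hz : ∀ l ∈ Finset.Icc p (-1 : ℤ), z l = 0 ∨ z l = 1)
    (hΔ0 : 0 ≤ Δy) (hΔp : Δy ≤ (2 : ℝ) ^ p)
    (hyj : yj = (NUj - NLj) * ((∑ l ∈ Finset.Icc p (-1 : ℤ), (2 : ℝ) ^ l * z l) + Δy) + NLj)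
    (hw : w = (NUj - NLj) * ((∑ l ∈ Finset.Icc p (-1 : ℤ), (2 : ℝ) ^ l * (yi * z l)) + Δw)
            + yi * NLj)
    (hΔwL : NLi * Δy ≤ Δw) (hΔwU : Δw ≤ NUi * Δy) :
    |w - yi * yj| ≤ (NUj - NLj) * (NUi - NLi) * (2 : ℝ) ^ p :=
  rnmdt_approximation_error_general NLi NUi NLj NUj yi yj w p hiL hiU hjL hjU z Δy Δw hΔ0 hΔp hyj hw
    hΔwL hΔwU
end
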